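/- Let (λ_j) and (d_j) be sequences of nonnegative reals with λ_j → ∞, and suppose there exist constants C, C' > 0 with d_j ≤ C·λ_j^{1/8} for all j ≥ 1 and #{j : λ_j ≤ x} ≤ C'·x^{3/2} for all x ≥ 1. Then as β → 0+, the sum ∑_j d_j e^{-β λ_j} (1 - (1 - e^{-β d_j})/(β d_j)) is O(β^{-3/4}). -/

import Mathlib

/-!
Since `0 ≤ 1 - (1 - e^{-x})/x ≤ x/2`, the `j`-th term is at most `(β/2) d_j² e^{-βλ_j}`, and
`d_j² ≤ C² λ_j^{1/4} + d_0²` for every `j` (the extra `d_0²` absorbs the term `j = 0`, where the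
gap bound is not assumed). With `t = β/2`, write `e^{-βλ_j} = e^{-tλ_j} e^{-tλ_j}`; one factor
absorbs the weight, `t λ^{1/4} e^{-tλ} ≤ t^{3/4}`, and grouping the `j` by `⌊tλ_j⌋` the counting
bound gives `∑_j e^{-tλ_j} = O(t^{-3/2})`. Altogether the sum is `O(t^{3/4 - 3/2}) = O(β^{-3/4})`.
-/

open Filter Topology Asymptotics Real Finset

theorem exp_neg_le_one_sub_add_sq_div_two {x : ℝ} (hx : 0 ≤ x) :
    exp (-x) ≤ 1 - x + x ^ 2 / 2 := by
  have h := sum_le_exp_of_nonneg hx 4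
  simp only [sum_range_succ, sum_range_zero] at h
  norm_num [Nat.factorial] at h
  -- `(1 - x + x²/2)(1 + x + x²/2 + x³/6) = 1 + x³/6 + x⁴/12 + x⁵/12`
  have hprod : 1 ≤ exp x * (1 - x + x ^ 2 / 2) := by
    have hq : 0 ≤ 1 - x + x ^ 2 / 2 := by nlinarith [sq_nonneg (x - 1)]
    nlinarith [mul_le_mul_of_nonneg_right h hq, pow_nonneg hx 3, pow_nonneg hx 4, pow_nonneg hx 5]
  rwa [exp_neg, inv_le_iff_one_le_mul₀' (exp_pos x)]

theorem rpow_le_exp {x a : ℝ} (hx : 0 ≤ x) (ha₀ : 0 ≤ a) (ha₁ : a ≤ 1) : x ^ a ≤ exp x := by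
  rcases le_total x 1 with h | h
  · exact (rpow_le_one hx h ha₀).trans (one_le_exp hx)
  · calc x ^ a ≤ x ^ (1 : ℝ) := rpow_le_rpow_of_exponent_le h ha₁
      _ = x := rpow_one x
      _ ≤ exp x := by linarith [add_one_le_exp x]

theorem one_sub_one_sub_exp_neg_div_nonneg {x : ℝ} (hx : 0 ≤ x) :
    0 ≤ 1 - (1 - exp (-x)) / x :=
  sub_nonneg.2 <| div_le_one_of_le₀ (by linarith [add_one_le_exp (-x)]) hx

theorem one_sub_one_sub_exp_neg_div_le {x : ℝ} (hx : 0 < x) :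
    1 - (1 - exp (-x)) / x ≤ x / 2 := by
  have h : x - x ^ 2 / 2 ≤ 1 - exp (-x) := by linarith [exp_neg_le_one_sub_add_sq_div_two hx.le]
  rw [sub_le_comm, le_div_iff₀ hx]
  linarith

theorem mul_rpow_mul_exp_neg_le {t x a : ℝ} (ht : 0 < t) (hx : 0 ≤ x) (ha₀ : 0 ≤ a)
    (ha₁ : a ≤ 1) : t * x ^ a * exp (-(t * x)) ≤ t ^ (1 - a) := by
  have h := rpow_le_exp (mul_nonneg ht.le hx) ha₀ ha₁
  rw [mul_rpow ht.le hx, ← le_div_iff₀' (rpow_pos_of_pos ht a)] at h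
  calc t * x ^ a * exp (-(t * x)) ≤ t * (exp (t * x) / t ^ a) * exp (-(t * x)) := by gcongr
    _ = t ^ (1 - a) := by
        rw [rpow_sub ht, rpow_one, exp_neg]
        field_simp

/-- The `j`-th summand of the theorem is `gapTerm β λ_j d_j`. -/
noncomputable def gapTerm (β l d : ℝ) : ℝ :=
  d * exp (-β * l) * (1 - (1 - exp (-β * d)) / (β * d))

theorem gapTerm_nonneg {β l d : ℝ} (hβ : 0 ≤ β) (hd : 0 ≤ d) : 0 ≤ gapTerm β l d := by
  unfold gapTerm
  rw [neg_mul β d]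
  have := one_sub_one_sub_exp_neg_div_nonneg (mul_nonneg hβ hd)
  positivity

theorem gapTerm_le {β l d : ℝ} (hβ : 0 < β) (hd : 0 ≤ d) :
    gapTerm β l d ≤ β * d ^ 2 / 2 * exp (-β * l) := by
  rcases hd.eq_or_lt with rfl | hd
  · simp [gapTerm]
  calc gapTerm β l d ≤ d * exp (-β * l) * (β * d / 2) := by
        unfold gapTerm
        rw [neg_mul β d]
        gcongr
        exact one_sub_one_sub_exp_neg_div_le (mul_pos hβ hd)
    _ = β * d ^ 2 / 2 * exp (-β * l) := by ring

theorem gapTerm_le_of_sq_le {β l d a A B : ℝ} (hβ₀ : 0 < β) (hβ₂ : β ≤ 2) (hl : 0 ≤ l)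
    (hd : 0 ≤ d) (ha₀ : 0 ≤ a) (ha₁ : a ≤ 1) (hA : 0 ≤ A) (hB : 0 ≤ B)
    (hsq : d ^ 2 ≤ A * l ^ a + B) :
    gapTerm β l d ≤ (A + B) * (β / 2) ^ (1 - a) * exp (-(β / 2 * l)) := by
  set t := β / 2 with ht
  have ht₀ : 0 < t := by positivity
  have hdecay := mul_rpow_mul_exp_neg_le ht₀ hl ha₀ ha₁
  have ht_le : t * exp (-(t * l)) ≤ t ^ (1 - a) :=
    calc t * exp (-(t * l)) ≤ t := mul_le_of_le_one_right ht₀.le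
          (exp_le_one_iff.2 (by nlinarith))
      _ ≤ t ^ (1 - a) := self_le_rpow_of_le_one ht₀.le (by linarith) (by linarith)
  have hsplit : exp (-β * l) = exp (-(t * l)) * exp (-(t * l)) := by
    rw [← exp_add, ht]; ring_nf
  calc gapTerm β l d ≤ β * d ^ 2 / 2 * exp (-β * l) := gapTerm_le hβ₀ hd
    _ = t * d ^ 2 * exp (-β * l) := by rw [ht]; ring
    _ ≤ t * (A * l ^ a + B) * exp (-β * l) := by gcongr
    _ = (A * (t * l ^ a * exp (-(t * l))) + B * (t * exp (-(t * l)))) * exp (-(t * l)) := by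
        rw [hsplit]; ring
    _ ≤ (A * t ^ (1 - a) + B * t ^ (1 - a)) * exp (-(t * l)) := by gcongr
    _ = (A + B) * t ^ (1 - a) * exp (-(t * l)) := by ring

theorem summable_add_one_rpow_mul_exp_neg (α : ℝ) :
    Summable fun n : ℕ => ((n : ℝ) + 1) ^ α * exp (-n) := by
  have hk : Summable fun n : ℕ => ((n : ℝ) + 1) ^ ⌈α⌉₊ * exp (-n) := by
    refine ((summable_nat_add_iff 1).2
      (summable_pow_mul_exp_neg_nat_mul ⌈α⌉₊ one_pos)).mul_left (exp 1) |>.congr fun n => ?_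
    rw [mul_left_comm, ← exp_add]
    push_cast
    ring_nf
  refine hk.of_nonneg_of_le (fun n => by positivity) fun n => ?_
  gcongr
  calc ((n : ℝ) + 1) ^ α ≤ ((n : ℝ) + 1) ^ (⌈α⌉₊ : ℝ) :=
        rpow_le_rpow_of_exponent_le (by linarith [n.cast_nonneg (α := ℝ)]) (Nat.le_ceil α)
    _ = _ := rpow_natCast _ _

section Counting

variable {ι : Type*} {l : ι → ℝ} {C' α : ℝ}

theorem card_filter_floor_mul_eq_le
    (hcount : ∀ x : ℝ, 1 ≤ x → ∀ s : Finset ι, (∀ j ∈ s, l j ≤ x) →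
      (s.card : ℝ) ≤ C' * x ^ α)
    {t : ℝ} (ht₀ : 0 < t) (ht₁ : t ≤ 1) (s : Finset ι) (n : ℕ) :
    (#{j ∈ s | ⌊t * l j⌋₊ = n} : ℝ) ≤ C' * (((n : ℝ) + 1) ^ α * t ^ (-α)) := by
  have hn : (1 : ℝ) ≤ n + 1 := by linarith [n.cast_nonneg (α := ℝ)]
  have h := hcount ((n + 1) / t) (by rw [le_div_iff₀ ht₀]; linarith) {j ∈ s | ⌊t * l j⌋₊ = n}
    fun j hj => by
      rw [le_div_iff₀ ht₀, mul_comm]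
      exact (mem_filter.1 hj).2 ▸ (Nat.lt_floor_add_one (t * l j)).le
  rwa [div_rpow (by linarith) ht₀.le, div_eq_mul_inv, ← rpow_neg ht₀.le] at h

theorem exists_sum_exp_neg_mul_le_of_card_le (hl : ∀ j, 0 ≤ l j) (hC' : 0 ≤ C')
    (hcount : ∀ x : ℝ, 1 ≤ x → ∀ s : Finset ι, (∀ j ∈ s, l j ≤ x) →
      (s.card : ℝ) ≤ C' * x ^ α) :
    ∃ K, ∀ t : ℝ, 0 < t → t ≤ 1 → ∀ s : Finset ι,
      ∑ j ∈ s, exp (-(t * l j)) ≤ K * t ^ (-α) := by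
  classical
  refine ⟨C' * ∑' n : ℕ, ((n : ℝ) + 1) ^ α * exp (-n), fun t ht₀ ht₁ s => ?_⟩
  calc ∑ j ∈ s, exp (-(t * l j))
      ≤ ∑ j ∈ s, exp (-(⌊t * l j⌋₊ : ℝ)) := by
        gcongr with j
        exact Nat.floor_le (mul_nonneg ht₀.le (hl j))
    _ = ∑ n ∈ s.image (fun j => ⌊t * l j⌋₊), #{j ∈ s | ⌊t * l j⌋₊ = n} * exp (-(n : ℝ)) := by
        simp only [sum_comp (fun n : ℕ => exp (-(n : ℝ))), nsmul_eq_mul]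
    _ ≤ ∑ n ∈ s.image (fun j => ⌊t * l j⌋₊), C' * (((n : ℝ) + 1) ^ α * t ^ (-α)) * exp (-n) := by
        gcongr with n
        exact card_filter_floor_mul_eq_le hcount ht₀ ht₁ s n
    _ = C' * (∑ n ∈ s.image (fun j => ⌊t * l j⌋₊), ((n : ℝ) + 1) ^ α * exp (-n)) * t ^ (-α) := by
        rw [mul_sum, sum_mul]
        exact sum_congr rfl fun n _ => by ring
    _ ≤ C' * (∑' n : ℕ, ((n : ℝ) + 1) ^ α * exp (-n)) * t ^ (-α) := by
        gcongr
        exact (summable_add_one_rpow_mul_exp_neg α).sum_le_tsum _ fun n _ => by positivity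

end Counting

theorem tsum_gapTerm_le {ι : Type*} {l d : ι → ℝ} {a α A B K β : ℝ} (hl : ∀ j, 0 ≤ l j)
    (hd : ∀ j, 0 ≤ d j) (ha₀ : 0 ≤ a) (ha₁ : a ≤ 1) (hA : 0 ≤ A) (hB : 0 ≤ B)
    (hsq : ∀ j, d j ^ 2 ≤ A * l j ^ a + B)
    (hK : ∀ t : ℝ, 0 < t → t ≤ 1 → ∀ s : Finset ι, ∑ j ∈ s, exp (-(t * l j)) ≤ K * t ^ (-α))
    (hβ₀ : 0 < β) (hβ₂ : β ≤ 2) :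
    ∑' j, gapTerm β (l j) (d j) ≤ (A + B) * K * (β / 2) ^ (1 - a - α) := by
  have ht₀ : 0 < β / 2 := by positivity
  refine Real.tsum_le_of_sum_le (fun j => gapTerm_nonneg hβ₀.le (hd j)) fun s => ?_
  calc ∑ j ∈ s, gapTerm β (l j) (d j)
      ≤ ∑ j ∈ s, (A + B) * (β / 2) ^ (1 - a) * exp (-(β / 2 * l j)) :=
        sum_le_sum fun j _ => gapTerm_le_of_sq_le hβ₀ hβ₂ (hl j) (hd j) ha₀ ha₁ hA hB (hsq j)
    _ = (A + B) * (β / 2) ^ (1 - a) * ∑ j ∈ s, exp (-(β / 2 * l j)) := by rw [mul_sum]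
    _ ≤ (A + B) * (β / 2) ^ (1 - a) * (K * (β / 2) ^ (-α)) := by
        gcongr
        exact hK _ ht₀ (by linarith) s
    _ = (A + B) * K * (β / 2) ^ (1 - a - α) := by
        rw [sub_eq_add_neg (1 - a), rpow_add ht₀]
        ring

theorem stmt_5_general (l d : ℕ → ℝ) (hl : ∀ j, 0 ≤ l j) (hd : ∀ j, 0 ≤ d j)
    (C C' : ℝ) (hC' : 0 < C')
    (hgap : ∀ j : ℕ, 1 ≤ j → d j ≤ C * l j ^ ((1 : ℝ) / 8))
    (hcount : ∀ x : ℝ, 1 ≤ x → ∀ s : Finset ℕ, (∀ j ∈ s, l j ≤ x) →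
      (s.card : ℝ) ≤ C' * x ^ ((3 : ℝ) / 2)) :
    (fun β : ℝ => ∑' j : ℕ, d j * Real.exp (-β * l j) *
        (1 - (1 - Real.exp (-β * d j)) / (β * d j)))
      =O[𝓝[>] 0] fun β : ℝ => β ^ (-(3 : ℝ) / 4) := by
  show (fun β => ∑' j, gapTerm β (l j) (d j)) =O[𝓝[>] 0] _
  obtain ⟨K, hK⟩ := exists_sum_exp_neg_mul_le_of_card_le hl hC'.le hcount
  have hsq : ∀ j, d j ^ 2 ≤ C ^ 2 * l j ^ ((1 : ℝ) / 4) + d 0 ^ 2 := by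
    rintro (_ | j)
    · exact le_add_of_nonneg_left (mul_nonneg (sq_nonneg C) (rpow_nonneg (hl 0) _))
    · calc d (j + 1) ^ 2 ≤ (C * l (j + 1) ^ ((1 : ℝ) / 8)) ^ 2 := by
            gcongr
            exacts [hd _, hgap _ j.succ_pos]
        _ = C ^ 2 * l (j + 1) ^ ((1 : ℝ) / 4) := by
            rw [mul_pow, ← rpow_mul_natCast (hl _)]
            norm_num
        _ ≤ _ := le_add_of_nonneg_right (sq_nonneg _)
  refine isBigO_iff.2 ⟨(C ^ 2 + d 0 ^ 2) * K * 2 ^ ((3 : ℝ) / 4), ?_⟩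
  filter_upwards [Ioc_mem_nhdsGT two_pos] with β ⟨hβ₀, hβ₂⟩
  have hsum := tsum_gapTerm_le hl hd (by norm_num) (by norm_num) (sq_nonneg C) (sq_nonneg (d 0))
    hsq hK hβ₀ hβ₂
  rw [norm_of_nonneg (tsum_nonneg fun j => gapTerm_nonneg hβ₀.le (hd j)),
    norm_of_nonneg (rpow_nonneg hβ₀.le _)]
  refine hsum.trans_eq ?_
  rw [show (1 : ℝ) - 1 / 4 - 3 / 2 = -(3 / 4) by norm_num, div_rpow hβ₀.le zero_le_two,
    rpow_neg zero_le_two, div_inv_eq_mul, neg_div]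
  ring

theorem stmt_5 (l d : ℕ → ℝ) (hl : ∀ j, 0 ≤ l j) (hd : ∀ j, 0 ≤ d j)
    (hlim : Tendsto l atTop atTop)
    (C C' : ℝ) (hC : 0 < C) (hC' : 0 < C')
    (hgap : ∀ j : ℕ, 1 ≤ j → d j ≤ C * l j ^ ((1 : ℝ) / 8))
    (hcount : ∀ x : ℝ, 1 ≤ x → ∀ s : Finset ℕ, (∀ j ∈ s, l j ≤ x) →
      (s.card : ℝ) ≤ C' * x ^ ((3 : ℝ) / 2)) :
    (fun β : ℝ => ∑' j : ℕ, d j * Real.exp (-β * l j) *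
        (1 - (1 - Real.exp (-β * d j)) / (β * d j)))
      =O[𝓝[>] 0] fun β : ℝ => β ^ (-(3 : ℝ) / 4) :=
  stmt_5_general l d hl hd C C' hC' hgap hcount
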